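/- arXiv:2107.13188 — 2 statements merged into one kernel-verified Lean document; each statement's English description precedes it below -/
import Mathlib

section
/- Let n ≥ 1, let Θ ∈ ℂ^{n×n} be symmetric with positive definite real part, let ν ∈ ℕⁿ be a multi-index, and let z ∈ ℂ with z ≠ 0 be such that the real part of z²Θ is also positive definite. Then for all r ∈ ℂⁿ: HG_{z²Θ}^ν(r) = (det Θ)^{1/4} · (det(z²Θ))^{−1/4} · (1/z)^{|ν|} · HG_Θ^ν(r/z). -/
open scoped BigOperators
open MeasureTheory Matrix

noncomputable section

namespace AHGPaper

/-- Complex partial derivative in coordinate `j`. -/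
def cpderiv {n : ℕ} (j : Fin n) (f : (Fin n → ℂ) → ℂ) : (Fin n → ℂ) → ℂ :=
  fun x => deriv (fun t : ℂ => f (Function.update x j t)) (x j)

/-- Mixed partial derivative of multi-order `ν`. -/
def mpderiv {n : ℕ} (ν : Fin n → ℕ) (f : (Fin n → ℂ) → ℂ) : (Fin n → ℂ) → ℂ :=
  (List.finRange n).foldr (fun j g => (cpderiv j)^[ν j] g) f

/-- The anisotropic Hermite-Gauss (AHG) function `HG_Θ^ν`. -/
def HG {n : ℕ} (Θ : Matrix (Fin n) (Fin n) ℂ) (ν : Fin n → ℕ) (r : Fin n → ℂ) : ℂ :=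
  (-(1 / (Real.sqrt 2 : ℂ))) ^ (∑ j, ν j) *
    ((∏ j, ((ν j).factorial : ℂ)) ^ (-(1 / 2 : ℂ))) *
    (((Real.pi : ℂ) ^ n * Θ.det) ^ (-(1 / 4 : ℂ))) *
    Complex.exp ((1 / 2 : ℂ) * (r ⬝ᵥ Θ⁻¹.mulVec r)) *
    mpderiv ν (fun x => Complex.exp (-(x ⬝ᵥ Θ⁻¹.mulVec x))) r

/-- The dual anisotropic Hermite-Gauss function `H̃G_Θ^ν`. -/
def HGd {n : ℕ} (Θ : Matrix (Fin n) (Fin n) ℂ) (ν : Fin n → ℕ) (r : Fin n → ℂ) : ℂ :=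
  (-(1 / (Real.sqrt 2 : ℂ))) ^ (∑ j, ν j) *
    ((∏ j, ((ν j).factorial : ℂ)) ^ (-(1 / 2 : ℂ))) *
    (((Real.pi : ℂ) ^ n * Θ.det) ^ (-(1 / 4 : ℂ))) *
    Complex.exp ((1 / 2 : ℂ) * ((Θ⁻¹.mulVec r) ⬝ᵥ Θ.mulVec (Θ⁻¹.mulVec r))) *
    mpderiv ν (fun x => Complex.exp (-(x ⬝ᵥ Θ.mulVec x))) (Θ⁻¹.mulVec r)

/-- Physicists' Hermite polynomial via Rodrigues' formula. -/
def hermiteH (k : ℕ) (z : ℂ) : ℂ :=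
  (-1) ^ k * Complex.exp (z ^ 2) * iteratedDeriv k (fun w => Complex.exp (-(w ^ 2))) z

/-- The `k`-th univariate Hermite-Gauss function `ψ_k`. -/
def psi (k : ℕ) (z : ℂ) : ℂ :=
  ((Real.sqrt Real.pi * 2 ^ k * k.factorial : ℝ) : ℂ) ^ (-(1 / 2 : ℂ)) *
    Complex.exp (-(z ^ 2) / 2) * hermiteH k z

/-- The vector `φ_ν(r)` whose `k`-th entry is `(1/√2)·√(ν_k)·HG_Θ^{ν-ε_k}(r)`. -/
def phiV {n : ℕ} (Θ : Matrix (Fin n) (Fin n) ℂ) (ν : Fin n → ℕ) (r : Fin n → ℂ) :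
    Fin n → ℂ :=
  fun k => (1 / (Real.sqrt 2 : ℂ)) * (Real.sqrt (ν k) : ℂ) *
    HG Θ (fun j => ν j - if j = k then 1 else 0) r

/-- The matrix `Φ_ν(r)`. -/
def PhiM {n : ℕ} (Θ : Matrix (Fin n) (Fin n) ℂ) (ν : Fin n → ℕ) (r : Fin n → ℂ) :
    Matrix (Fin n) (Fin n) ℂ :=
  Matrix.of fun j k =>
    if j = k then
      (Real.sqrt (ν j * (ν j - 1)) : ℂ) * HG Θ (fun l => ν l - if l = j then 2 else 0) r
    else
      (Real.sqrt (ν j * ν k) : ℂ) *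
        HG Θ (fun l => ν l - ((if l = j then 1 else 0) + (if l = k then 1 else 0))) r

/-- The `n`-dimensional linear canonical transform with parameter matrix `[[a,b],[c,d]]`. -/
def LCT {n : ℕ} (a b d : ℂ) (f : (Fin n → ℝ) → ℂ) (ζ : Fin n → ℝ) : ℂ :=
  (1 / (2 * (Real.pi : ℂ) * Complex.I * b)) ^ ((n : ℂ) / 2) *
    Complex.exp (Complex.I * d / (2 * b) * ((fun i => (ζ i : ℂ)) ⬝ᵥ fun i => (ζ i : ℂ))) *
    ∫ r : Fin n → ℝ, f r *
      Complex.exp (-(Complex.I / (2 * b)) *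
        ((fun i => (r i : ℂ)) ⬝ᵥ fun i => 2 * (ζ i : ℂ) - a * (r i : ℂ)))

/-- The `n`-dimensional Fourier transform `(2π)^{-n/2} ∫ f(r) e^{-i ζ·r} dr`. -/
def FT {n : ℕ} (f : (Fin n → ℝ) → ℂ) (ζ : Fin n → ℝ) : ℂ :=
  ((2 * Real.pi : ℝ) : ℂ) ^ (-(n : ℂ) / 2) *
    ∫ r : Fin n → ℝ,
      f r * Complex.exp (-Complex.I * ((fun i => (ζ i : ℂ)) ⬝ᵥ fun i => (r i : ℂ)))

/-- The Wigner-Ville distribution. -/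
def WVD {n : ℕ} (f : (Fin n → ℝ) → ℂ) (r ζ : Fin n → ℝ) : ℂ :=
  ((2 * Real.pi : ℝ) : ℂ) ^ (-(n : ℂ) / 2) *
    ∫ ξ : Fin n → ℝ,
      f (fun i => r i - ξ i / 2) * (starRingEnd ℂ) (f (fun i => r i + ξ i / 2)) *
        Complex.exp (-Complex.I * ((fun i => (ζ i : ℂ)) ⬝ᵥ fun i => (ξ i : ℂ)))

end AHGPaper

open AHGPaper

/-!
Replacing `Θ` by `z² Θ` turns the Gaussian `exp (-xᵀ Θ⁻¹ x)` into its composition with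
`x ↦ z⁻¹ x`, so by the chain rule each of the `|ν|` partial derivatives contributes one factor
`z⁻¹`. The quadratic form in the prefactor transforms the same way, and the normalising constant
`(πⁿ det Θ)^(-1/4)` becomes `(πⁿ det (z² Θ))^(-1/4)`; as `πⁿ > 0`, the principal branch lets
`πⁿ` split off, which is what the factor `(det Θ)^(1/4) (det (z² Θ))^(-1/4)` compensates.
If `det Θ = 0`, both sides vanish, since `0 ^ s = 0` for `s ≠ 0`.
-/

theorem Matrix.inv_smul₀ {ι K : Type*} [Fintype ι] [DecidableEq ι] [Field K] (k : K)
    (A : Matrix ι ι K) : (k • A)⁻¹ = k⁻¹ • A⁻¹ := by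
  rcases eq_or_ne k 0 with rfl | hk
  · simp
  by_cases hA : IsUnit A.det
  · exact Matrix.inv_smul' A (Units.mk0 k hk) hA
  · have hkA : ¬ IsUnit (k • A).det := by
      simpa [Matrix.det_smul, isUnit_iff_ne_zero, hk] using hA
    rw [Matrix.nonsing_inv_apply_not_isUnit _ hA, Matrix.nonsing_inv_apply_not_isUnit _ hkA,
      smul_zero]

theorem Matrix.dotProduct_sq_smul_mulVec {ι R : Type*} [Fintype ι] [CommSemiring R] (c : R)
    (B : Matrix ι ι R) (x : ι → R) :
    x ⬝ᵥ (c ^ 2 • B) *ᵥ x = (c • x) ⬝ᵥ B *ᵥ (c • x) := by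
  simp only [Matrix.smul_mulVec, Matrix.mulVec_smul, dotProduct_smul, smul_dotProduct,
    smul_eq_mul]
  ring

theorem Complex.ofReal_mul_cpow_of_pos {a : ℝ} (ha : 0 < a) (w s : ℂ) :
    ((a : ℂ) * w) ^ s = (a : ℂ) ^ s * w ^ s := by
  rcases eq_or_ne w 0 with rfl | hw
  · rcases eq_or_ne s 0 with rfl | hs <;> simp [*]
  have ha' : (a : ℂ) ≠ 0 := Complex.ofReal_ne_zero.mpr ha.ne'
  rw [Complex.cpow_def_of_ne_zero (mul_ne_zero ha' hw), Complex.log_ofReal_mul ha hw,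
    add_mul, Complex.exp_add, Complex.cpow_def_of_ne_zero ha',
    Complex.cpow_def_of_ne_zero hw, Complex.ofReal_log ha.le]

namespace AHGPaper

variable {n : ℕ}

theorem cpderiv_const_mul_comp_smul (j : Fin n) (a c : ℂ) (f : (Fin n → ℂ) → ℂ) :
    cpderiv j (fun x => a * f (c • x)) = fun r => a * c * cpderiv j f (c • r) := by
  funext r
  set g : ℂ → ℂ := fun s => f (Function.update (c • r) j s)
  have hline : (fun t => a * f (c • Function.update r j t)) = fun t => a * g (c * t) := by
    funext t
    rw [← Function.update_smul, smul_eq_mul]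
  change deriv (fun t => a * f (c • Function.update r j t)) (r j) = a * c * deriv g ((c • r) j)
  rw [hline, deriv_const_mul_field, deriv_comp_mul_left, Pi.smul_apply, smul_eq_mul,
    smul_eq_mul, mul_assoc]

theorem cpderiv_iterate_const_mul_comp_smul (j : Fin n) (m : ℕ) (a c : ℂ)
    (f : (Fin n → ℂ) → ℂ) :
    (cpderiv j)^[m] (fun x => a * f (c • x)) =
      fun r => a * c ^ m * (cpderiv j)^[m] f (c • r) := by
  induction m with
  | zero => simp
  | succ m ih =>
    rw [Function.iterate_succ_apply', ih, cpderiv_const_mul_comp_smul,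
      Function.iterate_succ_apply']
    funext r
    ring

theorem foldr_cpderiv_iterate_const_mul_comp_smul (ν : Fin n → ℕ) (L : List (Fin n))
    (a c : ℂ) (f : (Fin n → ℂ) → ℂ) :
    L.foldr (fun j g => (cpderiv j)^[ν j] g) (fun x => a * f (c • x)) =
      fun r => a * c ^ (L.map ν).sum * L.foldr (fun j g => (cpderiv j)^[ν j] g) f (c • r) := by
  induction L with
  | nil => simp
  | cons j L ih =>
    rw [List.foldr_cons, ih, cpderiv_iterate_const_mul_comp_smul, List.foldr_cons]
    funext r
    simp only [List.map_cons, List.sum_cons, pow_add]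
    ring

theorem mpderiv_comp_smul (ν : Fin n → ℕ) (c : ℂ) (f : (Fin n → ℂ) → ℂ) (r : Fin n → ℂ) :
    mpderiv ν (fun x => f (c • x)) r = c ^ (∑ j, ν j) * mpderiv ν f (c • r) := by
  simpa [mpderiv, ← Fin.sum_univ_def] using
    congrFun (foldr_cpderiv_iterate_const_mul_comp_smul ν (List.finRange n) 1 c f) r

end AHGPaper

theorem ahg_scaling_general (n : ℕ) (Θ : Matrix (Fin n) (Fin n) ℂ)
    (ν : Fin n → ℕ) (z : ℂ) (r : Fin n → ℂ) :
    HG ((z ^ 2) • Θ) ν r =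
      Θ.det ^ (1 / 4 : ℂ) * ((z ^ 2) • Θ).det ^ (-(1 / 4) : ℂ) *
        (1 / z) ^ (∑ j, ν j) * HG Θ ν (fun j => r j / z) := by
  have hquad (x : Fin n → ℂ) :
      x ⬝ᵥ ((z ^ 2) • Θ)⁻¹ *ᵥ x = (z⁻¹ • x) ⬝ᵥ Θ⁻¹ *ᵥ (z⁻¹ • x) := by
    rw [Matrix.inv_smul₀, ← inv_pow, Matrix.dotProduct_sq_smul_mulVec]
  have hmpderiv : mpderiv ν (fun x => Complex.exp (-(x ⬝ᵥ ((z ^ 2) • Θ)⁻¹ *ᵥ x))) r =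
      z⁻¹ ^ (∑ j, ν j) * mpderiv ν (fun y => Complex.exp (-(y ⬝ᵥ Θ⁻¹ *ᵥ y))) (z⁻¹ • r) := by
    simp only [hquad]
    exact mpderiv_comp_smul ν z⁻¹ (fun y => Complex.exp (-(y ⬝ᵥ Θ⁻¹ *ᵥ y))) r
  have hr : (fun j => r j / z) = z⁻¹ • r := funext fun j => div_eq_inv_mul (r j) z
  have hdet : Θ.det ^ (1 / 4 : ℂ) * Θ.det ^ (-(1 / 4) : ℂ) * ((z ^ 2) • Θ).det ^ (-(1 / 4) : ℂ)
      = ((z ^ 2) • Θ).det ^ (-(1 / 4) : ℂ) := by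
    rcases eq_or_ne Θ.det 0 with hΘ | hΘ
    · simp [hΘ]
    · rw [← Complex.cpow_add _ _ hΘ]
      norm_num
  rw [HG, HG, hmpderiv, hquad, hr, ← Complex.ofReal_pow,
    Complex.ofReal_mul_cpow_of_pos (by positivity),
    Complex.ofReal_mul_cpow_of_pos (by positivity), one_div z]
  nth_rw 1 [← hdet]
  ring

/-- scaling the anisotropy matrix by `z²`. -/
theorem ahg_scaling (n : ℕ) (hn : 1 ≤ n) (Θ : Matrix (Fin n) (Fin n) ℂ)
    (hsym : Θ.IsSymm) (hpd : (Θ.map Complex.re).PosDef)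
    (ν : Fin n → ℕ) (z : ℂ) (hz : z ≠ 0)
    (hpd' : (((z ^ 2) • Θ).map Complex.re).PosDef) (r : Fin n → ℂ) :
    HG ((z ^ 2) • Θ) ν r =
      Θ.det ^ (1 / 4 : ℂ) * ((z ^ 2) • Θ).det ^ (-(1 / 4) : ℂ) *
        (1 / z) ^ (∑ j, ν j) * HG Θ ν (fun j => r j / z) :=
  ahg_scaling_general n Θ ν z r
end
end

section
/- Let n ≥ 1, let Θ ∈ ℂ^{n×n} be symmetric with positive definite real part, let ν ∈ ℕⁿ, and let q_jᵀ denote the j-th row of Θ⁻¹. Then for every r ∈ ℝⁿ and every 1 ≤ j ≤ n: (∂/∂r_j) HG_Θ^ν(r) + (q_j·r)·HG_Θ^ν(r) = 2·(q_j·φ_ν(r)). -/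
open scoped BigOperators
open MeasureTheory Matrix

noncomputable section

open AHGPaper

/-!
Write `Q = Θ⁻¹`. A partial derivative `∂ⱼ` of `p(x) e^{q(x)}`, with `p, q` polynomials, is again of
this form, with `p` replaced by `∂ⱼp + (∂ⱼq) p`. Hence `∂^ν e^{-xᵀQx} = P_ν(x) e^{-xᵀQx}` for a
polynomial `P_ν`, so `HG_Θ^ν = c_ν P_ν e^{-xᵀQx/2}` and
`∂ⱼ HG_Θ^ν + (Qx)ⱼ HG_Θ^ν = c_ν (∂ⱼP_ν) e^{-xᵀQx/2}`.
As the Hessian of `-xᵀQx` is the constant `-2Q`, the operators `p ↦ ∂ₖp + (∂ₖq) p` satisfy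
`[∂ⱼ, ∂ₖ + ∂ₖq] = -2Qⱼₖ`, which yields `∂ⱼP_ν = -2 ∑ₖ νₖ Qⱼₖ P_{ν-εₖ}`; comparing the normalising
constants `c_ν` and `c_{ν-εₖ}` finishes the proof.
-/

namespace AHGPaper

open MvPolynomial
open Function (update update_self update_of_ne update_eq_self Semiconj)

section Algebra

variable {σ R : Type*} [CommSemiring R]

theorem pderiv_comm (i j : σ) (p : MvPolynomial σ R) :
    pderiv i (pderiv j p) = pderiv j (pderiv i p) := by
  induction p using MvPolynomial.induction_on with
  | C a => simp only [pderiv_C, map_zero]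
  | add p q hp hq => simp only [map_add, hp, hq]
  | mul_X p k hp =>
    simp only [pderiv_mul, map_add, hp]
    rcases eq_or_ne k i with rfl | hki <;> rcases eq_or_ne k j with rfl | hkj <;>
      simp_all [pderiv_X_self, pderiv_X_of_ne]

/-- `∂ⱼ` conjugated by the multiplication with `exp q`: `∂ⱼ (p e^q) = (twistedPDeriv q j p) e^q`. -/
def twistedPDeriv (q : MvPolynomial σ R) (j : σ) : Module.End R (MvPolynomial σ R) :=
  (pderiv j).toLinearMap + LinearMap.mulLeft R (pderiv j q)

variable {q : MvPolynomial σ R}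

theorem twistedPDeriv_apply (j : σ) (p : MvPolynomial σ R) :
    twistedPDeriv q j p = pderiv j p + pderiv j q * p := rfl

theorem commute_twistedPDeriv_mulLeft_C (j : σ) (c : R) :
    Commute (twistedPDeriv q j) (LinearMap.mulLeft R (C c)) := by
  refine LinearMap.ext fun p => ?_
  simp only [Module.End.mul_apply, LinearMap.mulLeft_apply, twistedPDeriv_apply, map_add,
    pderiv_C_mul]
  ring

theorem pow_twistedPDeriv_C_mul (j : σ) (m : ℕ) (c : R) (p : MvPolynomial σ R) :
    (twistedPDeriv q j ^ m) (C c * p) = C c * (twistedPDeriv q j ^ m) p :=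
  LinearMap.congr_fun ((commute_twistedPDeriv_mulLeft_C j c).pow_left m).eq p

theorem pderiv_twistedPDeriv {i j : σ} {c : R} (hq : pderiv i (pderiv j q) = C c)
    (p : MvPolynomial σ R) :
    pderiv i (twistedPDeriv q j p) = twistedPDeriv q j (pderiv i p) + C c * p := by
  rw [twistedPDeriv_apply, twistedPDeriv_apply, map_add, pderiv_mul, pderiv_comm i j p, hq]
  ring

theorem pderiv_pow_twistedPDeriv {i j : σ} {c : R} (hq : pderiv i (pderiv j q) = C c) (m : ℕ)
    (p : MvPolynomial σ R) :
    pderiv i ((twistedPDeriv q j ^ m) p) =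
      (twistedPDeriv q j ^ m) (pderiv i p) + (m : R) • (C c * (twistedPDeriv q j ^ (m - 1)) p) := by
  induction m generalizing p with
  | zero => simp
  | succ m ih =>
    rw [pow_succ, Module.End.mul_apply, ih, pderiv_twistedPDeriv hq, map_add,
      pow_twistedPDeriv_C_mul, ← Module.End.mul_apply, ← pow_succ, Nat.add_sub_cancel]
    rcases Nat.eq_zero_or_pos m with rfl | hm
    · simp
    · rw [← Module.End.mul_apply, ← pow_succ, Nat.sub_add_cancel hm]
      push_cast
      module

def twistedMPDeriv (q : MvPolynomial σ R) (ν : σ → ℕ) (L : List σ) :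
    Module.End R (MvPolynomial σ R) :=
  L.foldr (fun i E => twistedPDeriv q i ^ ν i * E) 1

theorem twistedMPDeriv_cons (ν : σ → ℕ) (i : σ) (L : List σ) :
    twistedMPDeriv q ν (i :: L) = twistedPDeriv q i ^ ν i * twistedMPDeriv q ν L := rfl

theorem twistedMPDeriv_congr {ν ν' : σ → ℕ} {L : List σ} (h : ∀ i ∈ L, ν i = ν' i) :
    twistedMPDeriv q ν L = twistedMPDeriv q ν' L := by
  induction L with
  | nil => rfl
  | cons i L ih =>
    rw [twistedMPDeriv_cons, twistedMPDeriv_cons, h i List.mem_cons_self,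
      ih fun k hk => h k (List.mem_cons_of_mem i hk)]

/-- Since the Hessian `H` of `q` is constant, moving `∂ᵢ` through `(twistedPDeriv q k)^{ν k}` costs
`ν k • H i k` times one factor `twistedPDeriv q k` less. -/
theorem pderiv_twistedMPDeriv [DecidableEq σ] {H : σ → σ → R}
    (hq : ∀ i k, pderiv i (pderiv k q) = C (H i k)) (ν : σ → ℕ) (i : σ) {L : List σ}
    (hL : L.Nodup) (p : MvPolynomial σ R) :
    pderiv i (twistedMPDeriv q ν L p) = twistedMPDeriv q ν L (pderiv i p) +
      ∑ k ∈ L.toFinset, (ν k : R) • (C (H i k) * twistedMPDeriv q (update ν k (ν k - 1)) L p) := by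
  induction L with
  | nil => simp [twistedMPDeriv]
  | cons l L ih =>
    obtain ⟨hlL, hL⟩ := List.nodup_cons.mp hL
    have hlL' : l ∉ L.toFinset := by simpa using hlL
    have hfar : ∀ k ∈ L.toFinset,
        (twistedPDeriv q l ^ ν l) ((ν k : R) • (C (H i k) *
            twistedMPDeriv q (update ν k (ν k - 1)) L p)) =
          (ν k : R) • (C (H i k) * twistedMPDeriv q (update ν k (ν k - 1)) (l :: L) p) := by
      intro k hk
      have hlk : l ≠ k := fun h => hlL' (h ▸ hk)
      rw [map_smul, pow_twistedPDeriv_C_mul, twistedMPDeriv_cons, update_of_ne hlk,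
        Module.End.mul_apply]
    have hnear : (twistedPDeriv q l ^ (ν l - 1)) (twistedMPDeriv q ν L p) =
        twistedMPDeriv q (update ν l (ν l - 1)) (l :: L) p := by
      rw [twistedMPDeriv_cons, update_self, Module.End.mul_apply,
        twistedMPDeriv_congr fun k hk => (update_of_ne (ne_of_mem_of_not_mem hk hlL) ..).symm]
    rw [twistedMPDeriv_cons, Module.End.mul_apply, pderiv_pow_twistedPDeriv (hq i l), ih hL,
      map_add, map_sum, Finset.sum_congr rfl hfar, hnear, List.toFinset_cons,
      Finset.sum_insert hlL', ← Module.End.mul_apply, ← twistedMPDeriv_cons]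
    abel

end Algebra

section Forms

variable {σ R : Type*} [Fintype σ] [CommSemiring R]

def linearForm (v : σ → R) : MvPolynomial σ R :=
  ∑ k, C (v k) * X k

def quadForm (Q : Matrix σ σ R) : MvPolynomial σ R :=
  ∑ i, X i * linearForm (Q i)

theorem eval_linearForm (v x : σ → R) : eval x (linearForm v) = v ⬝ᵥ x := by
  simp [linearForm, dotProduct]

theorem eval_quadForm (Q : Matrix σ σ R) (x : σ → R) : eval x (quadForm Q) = x ⬝ᵥ Q *ᵥ x := by
  simp [quadForm, eval_linearForm, dotProduct, Matrix.mulVec]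

theorem pderiv_linearForm (v : σ → R) (j : σ) : pderiv j (linearForm v) = C (v j) := by
  classical
  simp [linearForm, pderiv_X, Pi.single_apply]

theorem pderiv_quadForm (Q : Matrix σ σ R) (j : σ) :
    pderiv j (quadForm Q) = linearForm (Q j) + linearForm (Qᵀ j) := by
  classical
  simp only [quadForm, map_sum, pderiv_mul, pderiv_linearForm, pderiv_X, Finset.sum_add_distrib]
  simp [linearForm, Pi.single_apply, mul_comm, add_comm]

theorem pderiv_pderiv_quadForm (Q : Matrix σ σ R) (i j : σ) :
    pderiv i (pderiv j (quadForm Q)) = C (Q j i + Q i j) := by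
  simp [pderiv_quadForm, pderiv_linearForm]

end Forms

section Analysis

variable {n : ℕ}

theorem hasDerivAt_eval_update (p : MvPolynomial (Fin n) ℂ) (x : Fin n → ℂ) (j : Fin n) :
    HasDerivAt (fun t => eval (update x j t) p) (eval x (pderiv j p)) (x j) := by
  induction p using MvPolynomial.induction_on with
  | C a => simpa using hasDerivAt_const (x j) a
  | add p q hp hq => simpa using hp.fun_add hq
  | mul_X p k hp =>
    simp only [eval_mul, eval_X, pderiv_mul]
    rcases eq_or_ne k j with rfl | hkj
    · simpa [mul_comm] using hp.fun_mul (hasDerivAt_id (x k))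
    · simpa [hkj, pderiv_X_of_ne hkj] using hp.mul_const (x k)

theorem cpderiv_eval_mul_exp (q p : MvPolynomial (Fin n) ℂ) (j : Fin n) :
    cpderiv j (fun x => eval x p * Complex.exp (eval x q)) =
      fun x => eval x (twistedPDeriv q j p) * Complex.exp (eval x q) := by
  funext x
  have h := (hasDerivAt_eval_update p x j).fun_mul (hasDerivAt_eval_update q x j).cexp
  rw [update_eq_self] at h
  rw [cpderiv, h.deriv, twistedPDeriv_apply, eval_add, eval_mul]
  ring

theorem foldr_cpderiv_eval_mul_exp (q p : MvPolynomial (Fin n) ℂ) (ν : Fin n → ℕ)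
    (L : List (Fin n)) :
    L.foldr (fun j g => (cpderiv j)^[ν j] g) (fun x => eval x p * Complex.exp (eval x q)) =
      fun x => eval x (twistedMPDeriv q ν L p) * Complex.exp (eval x q) := by
  induction L with
  | nil => rfl
  | cons i L ih =>
    have hsemiconj : Semiconj (fun p x => eval x p * Complex.exp (eval x q))
        (twistedPDeriv q i) (cpderiv i) := fun p => (cpderiv_eval_mul_exp q p i).symm
    rw [List.foldr_cons, ih, ← (hsemiconj.iterate_right (ν i)) _, twistedMPDeriv_cons,
      Module.End.mul_apply, ← Module.End.pow_apply]

theorem mpderiv_eval_mul_exp (q p : MvPolynomial (Fin n) ℂ) (ν : Fin n → ℕ) :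
    mpderiv ν (fun x => eval x p * Complex.exp (eval x q)) =
      fun x => eval x (twistedMPDeriv q ν (List.finRange n) p) * Complex.exp (eval x q) :=
  foldr_cpderiv_eval_mul_exp q p ν _

end Analysis

section AHG

variable {n : ℕ}

theorem natCast_cpow_neg_half (N : ℕ) :
    (N : ℂ) ^ (-(1 / 2 : ℂ)) = ((Real.sqrt N)⁻¹ : ℝ) := by
  rw [show (N : ℂ) = ((N : ℝ) : ℂ) from rfl, show -(1 / 2 : ℂ) = ((-(1 / 2) : ℝ) : ℂ) by norm_num,
    ← Complex.ofReal_cpow (Nat.cast_nonneg N), Real.rpow_neg (Nat.cast_nonneg N),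
    Real.sqrt_eq_rpow]

def hgCoeff (ν : Fin n → ℕ) : ℂ :=
  (-(1 / (Real.sqrt 2 : ℂ))) ^ (∑ j, ν j) * ((∏ j, ((ν j).factorial : ℂ)) ^ (-(1 / 2 : ℂ)))

theorem hgCoeff_update (ν : Fin n → ℕ) (k : Fin n) (a : ℕ) :
    hgCoeff (update ν k a) =
      (-(1 / (Real.sqrt 2 : ℂ))) ^ a * ((Real.sqrt a.factorial)⁻¹ : ℝ) *
        ((-(1 / (Real.sqrt 2 : ℂ))) ^ (∑ j ∈ Finset.univ \ {k}, ν j) *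
          ((Real.sqrt (∏ j ∈ Finset.univ \ {k}, (ν j).factorial : ℕ))⁻¹ : ℝ)) := by
  have hprod : ∏ j, (((update ν k a j).factorial : ℕ) : ℂ) =
      ((a.factorial * ∏ j ∈ Finset.univ \ {k}, (ν j).factorial : ℕ) : ℂ) := by
    simp only [Function.apply_update (fun _ (m : ℕ) => ((m.factorial : ℕ) : ℂ)),
      Finset.prod_update_of_mem (Finset.mem_univ k)]
    push_cast
    rfl
  rw [hgCoeff, Finset.sum_update_of_mem (Finset.mem_univ k), hprod, natCast_cpow_neg_half,
    Nat.cast_mul, Real.sqrt_mul (Nat.cast_nonneg _), mul_inv, pow_add]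
  push_cast
  ring

theorem hgCoeff_mul_neg_two_mul (ν : Fin n → ℕ) (k : Fin n) :
    hgCoeff ν * (-2 * ν k) = 2 / Real.sqrt 2 * Real.sqrt (ν k) * hgCoeff (update ν k (ν k - 1)) := by
  cases hk : ν k with
  | zero => simp
  | succ m =>
    have hν : ν = update ν k (m + 1) := by rw [← hk, update_eq_self]
    have hm : ((Real.sqrt (m + 1 : ℕ) : ℝ) : ℂ) ^ 2 = (m + 1 : ℕ) := by
      rw [← Complex.ofReal_pow, Real.sq_sqrt (Nat.cast_nonneg _), Complex.ofReal_natCast]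
    have hmne : ((Real.sqrt (m + 1 : ℕ) : ℝ) : ℂ) ≠ 0 := by
      exact_mod_cast (Real.sqrt_pos.mpr (Nat.cast_pos.mpr m.succ_pos)).ne'
    have hfne : ((Real.sqrt m.factorial : ℝ) : ℂ) ≠ 0 := by
      exact_mod_cast (Real.sqrt_pos.mpr (Nat.cast_pos.mpr m.factorial_pos)).ne'
    conv_lhs => rw [hν]
    rw [hgCoeff_update, hgCoeff_update, Nat.add_sub_cancel, Nat.factorial_succ, Nat.cast_mul,
      Real.sqrt_mul (Nat.cast_nonneg _), ← hm]
    push_cast at hmne hfne ⊢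
    rw [pow_succ]
    field_simp

def ahgPoly (Q : Matrix (Fin n) (Fin n) ℂ) (ν : Fin n → ℕ) : MvPolynomial (Fin n) ℂ :=
  twistedMPDeriv (-quadForm Q) ν (List.finRange n) 1

theorem pderiv_ahgPoly (Q : Matrix (Fin n) (Fin n) ℂ) (ν : Fin n → ℕ) (j : Fin n) :
    pderiv j (ahgPoly Q ν) =
      ∑ k, (ν k : ℂ) • (C (-(Q k j + Q j k)) * ahgPoly Q (update ν k (ν k - 1))) := by
  have hessian : ∀ i k, pderiv i (pderiv k (-quadForm Q)) = C (-(Q k i + Q i k)) := by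
    simp [pderiv_pderiv_quadForm]
  rw [ahgPoly, pderiv_twistedMPDeriv hessian ν j (List.nodup_finRange n), pderiv_one, map_zero,
    zero_add, List.toFinset_finRange]
  rfl

theorem HG_eq_eval_mul_exp (Θ : Matrix (Fin n) (Fin n) ℂ) (ν : Fin n → ℕ) :
    HG Θ ν = fun x =>
      eval x (C (hgCoeff ν * ((Real.pi : ℂ) ^ n * Θ.det) ^ (-(1 / 4 : ℂ))) * ahgPoly Θ⁻¹ ν) *
        Complex.exp (eval x (C (-(1 / 2)) * quadForm Θ⁻¹)) := by
  have hgauss : (fun x => Complex.exp (-(x ⬝ᵥ Θ⁻¹ *ᵥ x))) =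
      fun x => eval x 1 * Complex.exp (eval x (-quadForm Θ⁻¹)) := by
    simp [eval_quadForm]
  funext x
  rw [HG, hgauss, mpderiv_eval_mul_exp, ← ahgPoly]
  simp only [eval_mul, eval_C, eval_neg, eval_quadForm]
  rw [show -(1 / 2) * (x ⬝ᵥ Θ⁻¹ *ᵥ x) = 1 / 2 * (x ⬝ᵥ Θ⁻¹ *ᵥ x) + -(x ⬝ᵥ Θ⁻¹ *ᵥ x) by ring,
    Complex.exp_add, hgCoeff]
  ring

theorem HG_apply (Θ : Matrix (Fin n) (Fin n) ℂ) (ν : Fin n → ℕ) (x : Fin n → ℂ) :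
    HG Θ ν x = hgCoeff ν * ((Real.pi : ℂ) ^ n * Θ.det) ^ (-(1 / 4 : ℂ)) * eval x (ahgPoly Θ⁻¹ ν) *
      Complex.exp (-(1 / 2) * (x ⬝ᵥ Θ⁻¹ *ᵥ x)) := by
  simp only [HG_eq_eval_mul_exp, eval_mul, eval_C, eval_quadForm]

theorem cpderiv_HG_add_mul_HG {Θ : Matrix (Fin n) (Fin n) ℂ} (hQ : Θ⁻¹.IsSymm) (ν : Fin n → ℕ)
    (j : Fin n) (x : Fin n → ℂ) :
    cpderiv j (HG Θ ν) x + (Θ⁻¹ j ⬝ᵥ x) * HG Θ ν x =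
      hgCoeff ν * ((Real.pi : ℂ) ^ n * Θ.det) ^ (-(1 / 4 : ℂ)) * eval x (pderiv j (ahgPoly Θ⁻¹ ν)) *
        Complex.exp (-(1 / 2) * (x ⬝ᵥ Θ⁻¹ *ᵥ x)) := by
  rw [HG_eq_eval_mul_exp, cpderiv_eval_mul_exp, twistedPDeriv_apply]
  simp only [pderiv_C_mul, pderiv_quadForm, hQ.eq, eval_add, eval_mul, eval_C, eval_linearForm,
    eval_quadForm]
  ring

theorem phiV_eq (Θ : Matrix (Fin n) (Fin n) ℂ) (ν : Fin n → ℕ) (x : Fin n → ℂ) (k : Fin n) :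
    phiV Θ ν x k = 1 / (Real.sqrt 2 : ℂ) * (Real.sqrt (ν k) : ℂ) * HG Θ (update ν k (ν k - 1)) x := by
  have hupdate : (fun j => ν j - if j = k then 1 else 0) = update ν k (ν k - 1) := by
    funext j
    rcases eq_or_ne j k with rfl | hjk <;> simp [*]
  rw [phiV, hupdate]

end AHG

end AHGPaper

theorem ahg_partial_deriv_general (n : ℕ) (Θ : Matrix (Fin n) (Fin n) ℂ)
    (hsym : Θ.IsSymm)
    (ν : Fin n → ℕ) (r : Fin n → ℝ) (j : Fin n) :
    cpderiv j (HG Θ ν) (fun i => (r i : ℂ)) +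
        ((Θ⁻¹ j) ⬝ᵥ fun i => (r i : ℂ)) * HG Θ ν (fun i => (r i : ℂ)) =
      2 * ((Θ⁻¹ j) ⬝ᵥ phiV Θ ν (fun i => (r i : ℂ))) := by
  have hQ : Θ⁻¹.IsSymm := hsym.inv
  rw [cpderiv_HG_add_mul_HG hQ, pderiv_ahgPoly, dotProduct.eq_1 (Θ⁻¹ j), Finset.mul_sum, map_sum,
    Finset.mul_sum, Finset.sum_mul]
  refine Finset.sum_congr rfl fun k _ => ?_
  rw [phiV_eq, HG_apply, hQ.apply j k, MvPolynomial.smul_eval, MvPolynomial.eval_mul,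
    MvPolynomial.eval_C]
  generalize ((Real.pi : ℂ) ^ n * Θ.det) ^ (-(1 / 4 : ℂ)) = K
  generalize Complex.exp _ = E
  generalize MvPolynomial.eval _ (ahgPoly _ _) = P
  linear_combination Θ⁻¹ j k * K * P * E * hgCoeff_mul_neg_two_mul ν k

/-- partial derivative identity for the AHG function. -/
theorem ahg_partial_deriv (n : ℕ) (hn : 1 ≤ n) (Θ : Matrix (Fin n) (Fin n) ℂ)
    (hsym : Θ.IsSymm) (hpd : (Θ.map Complex.re).PosDef)
    (ν : Fin n → ℕ) (r : Fin n → ℝ) (j : Fin n) :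
    cpderiv j (HG Θ ν) (fun i => (r i : ℂ)) +
        ((Θ⁻¹ j) ⬝ᵥ fun i => (r i : ℂ)) * HG Θ ν (fun i => (r i : ℂ)) =
      2 * ((Θ⁻¹ j) ⬝ᵥ phiV Θ ν (fun i => (r i : ℂ))) :=
  ahg_partial_deriv_general n Θ hsym ν r j
end
end
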